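/- Let M,N be positive integers, let f:{0,…,M−1}×{0,…,N−1}→ℍ be a discrete quaternion signal supported on a set of at most N_t index pairs, and let Λ ⊆ {0,…,M−1}×{0,…,N−1} be a set of frequencies with cardinality N_ω. Then the energy of the DQFT of f restricted to Λ satisfies ∑_{(u,v)∈Λ} |f̂(u,v)|² ≤ (N_t·N_ω/(MN)) · ∑_{t,s} |f(t,s)|². -/

import Mathlib

open scoped BigOperators Classical

noncomputable def qI : Quaternion ℝ := ⟨0, 1, 0, 0⟩
noncomputable def qJ : Quaternion ℝ := ⟨0, 0, 1, 0⟩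

/-- exp(θ q) = cos θ + (sin θ) q for a (unit pure) quaternion q. -/
noncomputable def qexp (q : Quaternion ℝ) (θ : ℝ) : Quaternion ℝ :=
  ((Real.cos θ : ℝ) : Quaternion ℝ) + (Real.sin θ) • q

/-- Two-sided discrete quaternion Fourier transform. -/
noncomputable def dqft (M N : ℕ) (f : Fin M → Fin N → Quaternion ℝ)
    (u : Fin M) (v : Fin N) : Quaternion ℝ :=
  ((Real.sqrt (M * N))⁻¹ : ℝ) •
    ∑ t : Fin M, ∑ s : Fin N,
      qexp qI (-(2 * Real.pi * u.val * t.val / M)) * f t s *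
        qexp qJ (-(2 * Real.pi * v.val * s.val / N))

lemma norm_qexpI (θ : ℝ) : ‖qexp qI θ‖ = 1 := by
  have h : Quaternion.normSq (qexp qI θ) = 1 := by
    simp [qexp, qI, Quaternion.normSq_def']
    change (Real.cos θ + Real.sin θ * 0) ^ 2 + (Real.sin θ * 1) ^ 2 + (Real.sin θ * 0) ^ 2 + (Real.sin θ * 0) ^ 2 = 1
    simp
  have h2 := Quaternion.normSq_eq_norm_mul_self (qexp qI θ)
  nlinarith [norm_nonneg (qexp qI θ)]

lemma norm_qexpJ (θ : ℝ) : ‖qexp qJ θ‖ = 1 := by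
  have h : Quaternion.normSq (qexp qJ θ) = 1 := by
    simp [qexp, qJ, Quaternion.normSq_def']
    change (Real.cos θ + Real.sin θ * 0) ^ 2 + (Real.sin θ * 0) ^ 2 + (Real.sin θ * 1) ^ 2 + (Real.sin θ * 0) ^ 2 = 1
    simp
  have h2 := Quaternion.normSq_eq_norm_mul_self (qexp qJ θ)
  nlinarith [norm_nonneg (qexp qJ θ)]

lemma dqft_norm_le (M N : ℕ) (f : Fin M → Fin N → Quaternion ℝ)
    (u : Fin M) (v : Fin N) :
    ‖dqft M N f u v‖ ≤ (Real.sqrt (M * N))⁻¹ *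
      ∑ p ∈ (Finset.univ.filter (fun p : Fin M × Fin N => f p.1 p.2 ≠ 0)),
        ‖f p.1 p.2‖ := by
  have hsum : ∑ p ∈ (Finset.univ.filter (fun p : Fin M × Fin N => f p.1 p.2 ≠ 0)),
        ‖f p.1 p.2‖ = ∑ t : Fin M, ∑ s : Fin N, ‖f t s‖ := by
    rw [← Finset.sum_product', Finset.sum_filter]
    apply Finset.sum_congr rfl
    intro p _
    by_cases h : f p.1 p.2 = 0 <;> simp [h]
  rw [hsum, dqft, norm_smul]
  gcongr
  · simp [Real.norm_eq_abs, abs_of_nonneg, Real.sqrt_nonneg]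
  · calc ‖∑ t : Fin M, ∑ s : Fin N,
        qexp qI (-(2 * Real.pi * u.val * t.val / M)) * f t s *
          qexp qJ (-(2 * Real.pi * v.val * s.val / N))‖
        ≤ ∑ t : Fin M, ‖∑ s : Fin N,
            qexp qI (-(2 * Real.pi * u.val * t.val / M)) * f t s *
              qexp qJ (-(2 * Real.pi * v.val * s.val / N))‖ := norm_sum_le _ _
      _ ≤ ∑ t : Fin M, ∑ s : Fin N, ‖f t s‖ := by
          apply Finset.sum_le_sum
          intro t _
          refine (norm_sum_le _ _).trans (Finset.sum_le_sum fun s _ => ?_)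
          rw [norm_mul, norm_mul, norm_qexpI, norm_qexpJ]
          simp

/-- Energy bound for the DQFT restricted to a frequency set `Λ`. -/
theorem dqft_energy_bound (M N : ℕ) (hM : 0 < M) (hN : 0 < N)
    (f : Fin M → Fin N → Quaternion ℝ) (Nt : ℕ)
    (hsupp : (Finset.univ.filter (fun p : Fin M × Fin N => f p.1 p.2 ≠ 0)).card ≤ Nt)
    (Λ : Finset (Fin M × Fin N)) :
    ∑ p ∈ Λ, ‖dqft M N f p.1 p.2‖ ^ 2 ≤
      ((Nt : ℝ) * Λ.card / (M * N)) * ∑ t : Fin M, ∑ s : Fin N, ‖f t s‖ ^ 2 := by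
  set S := (Finset.univ.filter (fun p : Fin M × Fin N => f p.1 p.2 ≠ 0)) with hS
  set E := ∑ t : Fin M, ∑ s : Fin N, ‖f t s‖ ^ 2 with hE
  have hEnn : 0 ≤ E := Finset.sum_nonneg fun t _ =>
    Finset.sum_nonneg fun s _ => by positivity
  have hMN : (0 : ℝ) < (M : ℝ) * N := by positivity
  -- pointwise bound
  have key : ∀ (u : Fin M) (v : Fin N),
      ‖dqft M N f u v‖ ^ 2 ≤ (Nt : ℝ) / (M * N) * E := by
    intro u v
    have h1 := dqft_norm_le M N f u v
    have hCS : (∑ p ∈ S, ‖f p.1 p.2‖) ^ 2 ≤ (S.card : ℝ) * ∑ p ∈ S, ‖f p.1 p.2‖ ^ 2 :=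
      sq_sum_le_card_mul_sum_sq
    have hSE : ∑ p ∈ S, ‖f p.1 p.2‖ ^ 2 ≤ E := by
      rw [hE, ← Finset.sum_product']
      apply Finset.sum_le_sum_of_subset_of_nonneg (Finset.filter_subset _ _)
      intro p _ _; positivity
    have hsq : Real.sqrt ((M : ℝ) * N) ^ 2 = (M : ℝ) * N :=
      Real.sq_sqrt hMN.le
    have h2 : ‖dqft M N f u v‖ ^ 2 ≤
        ((Real.sqrt (M * N))⁻¹ * ∑ p ∈ S, ‖f p.1 p.2‖) ^ 2 :=
      pow_le_pow_left₀ (norm_nonneg _) h1 2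
    have hinv : ((Real.sqrt ((M : ℝ) * N))⁻¹) ^ 2 = ((M : ℝ) * N)⁻¹ := by
      rw [← Real.sqrt_inv, Real.sq_sqrt (by positivity)]
    calc ‖dqft M N f u v‖ ^ 2
        ≤ ((Real.sqrt (M * N))⁻¹)^2 * (∑ p ∈ S, ‖f p.1 p.2‖) ^ 2 := by
          rw [← mul_pow]; exact h2
      _ = ((M : ℝ) * N)⁻¹ * (∑ p ∈ S, ‖f p.1 p.2‖) ^ 2 := by
          rw [hinv]
      _ ≤ ((M : ℝ) * N)⁻¹ * ((S.card : ℝ) * E) := by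
          have hcard : (0 : ℝ) ≤ (S.card : ℝ) := Nat.cast_nonneg _
          exact mul_le_mul_of_nonneg_left
            (hCS.trans (mul_le_mul_of_nonneg_left hSE hcard))
            (inv_nonneg.2 hMN.le)
      _ ≤ ((M : ℝ) * N)⁻¹ * ((Nt : ℝ) * E) :=
          mul_le_mul_of_nonneg_left
            (mul_le_mul_of_nonneg_right (by exact_mod_cast hsupp) hEnn)
            (inv_nonneg.2 hMN.le)
      _ = (Nt : ℝ) / (M * N) * E := by ring
  calc ∑ p ∈ Λ, ‖dqft M N f p.1 p.2‖ ^ 2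
      ≤ ∑ _p ∈ Λ, (Nt : ℝ) / (M * N) * E :=
        Finset.sum_le_sum fun p _ => key p.1 p.2
    _ = (Λ.card : ℝ) * ((Nt : ℝ) / (M * N) * E) := by
        rw [Finset.sum_const, nsmul_eq_mul]
    _ = ((Nt : ℝ) * Λ.card / (M * N)) * E := by ring
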